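/- arXiv:1508.00999 — 2 statements merged into one kernel-verified Lean document; each statement's English description precedes it below -/
import Mathlib

section
/- For every real a ≥ 0, every integer n ≥ 1, all reals 0 ≤ α ≤ β and every x ≥ 0, the first moment of the Stancu-type operator is L_{n,a}^{α,β}(t;x) = (n/(n+β))·x + (a/(n+β))·x/(1+x) + α/(n+β). -/
open MeasureTheory Filter

/-- Rising factorial `(n)_i = n(n+1)⋯(n+i−1)`, with `(n)_0 = 1`. -/
noncomputable def risingFac (n i : ℕ) : ℝ := ∏ j ∈ Finset.range i, ((n : ℝ) + j)

/-- `p_k(n,a) = Σ_{i=0}^{k} C(k,i)·(n)_i·a^{k−i}`. -/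
noncomputable def pCoef (n : ℕ) (a : ℝ) (k : ℕ) : ℝ :=
  ∑ i ∈ Finset.range (k + 1), (Nat.choose k i : ℝ) * risingFac n i * a ^ (k - i)

/-- Generalized Baskakov basis function `W_{n,k}^a(x)`. -/
noncomputable def W (n : ℕ) (a : ℝ) (k : ℕ) (x : ℝ) : ℝ :=
  Real.exp (-(a * x) / (1 + x)) * (pCoef n a k / (Nat.factorial k : ℝ)) * x ^ k /
    (1 + x) ^ (k + n)

/-- Stancu-type operator `L_{n,a}^{α,β}(f;x) = Σ_k W_{n,k}^a(x) f((k+α)/(n+β))`. -/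
noncomputable def Lop (n : ℕ) (a α β : ℝ) (f : ℝ → ℝ) (x : ℝ) : ℝ :=
  ∑' k : ℕ, W n a k x * f (((k : ℝ) + α) / ((n : ℝ) + β))

/-- Generalized Baskakov–Kantorovich–Stancu operator `T_{n,a}^{α,β}(f;x)`. -/
noncomputable def TKS (n : ℕ) (a α β : ℝ) (f : ℝ → ℝ) (x : ℝ) : ℝ :=
  ((n : ℝ) + β) *
    ∑' k : ℕ, W n a k x *
      ∫ t in (((k : ℝ) + α) / ((n : ℝ) + β))..(((k : ℝ) + α + 1) / ((n : ℝ) + β)), f t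

/-!
Put `t = x / (1 + x)`, so that `1 - t = (1 + x)⁻¹`. Then
`W n a k x = e^{-a t} (1 - t)^n · (p_k / k!) t^k`, and `p_k / k!` is the Cauchy product of the
coefficients of `(1 - t)^{-n} = ∑ (n)_i / i! · t^i` and of `e^{a t}`. Hence `∑ₖ W n a k x = 1`.
Splitting `k = i + (k - i)` in the Cauchy product, the first moment `∑ₖ k W n a k x` is
`e^{-a t} (1 - t)^n` times the sums `∑ i · (n)_i / i! · t^i = n t (1 - t)^{-(n+1)}`
and `∑ j · (a t)^j / j! = a t e^{a t}`, which gives `n t / (1 - t) + a t = n x + a x / (1 + x)`.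
-/

open Finset
open scoped Nat

theorem HasSum.nat_mul_of_succ_mul_eq {R : Type*} [Ring R] [TopologicalSpace R]
    [IsTopologicalRing R] {f g : ℕ → R} {c G : R} (hg : HasSum g G)
    (h : ∀ i : ℕ, ((i : R) + 1) * f (i + 1) = c * g i) :
    HasSum (fun i : ℕ => (i : R) * f i) (c * G) := by
  refine (hasSum_nat_add_iff' 1).mp ?_
  simpa [h] using hg.mul_left c

theorem HasSum.sum_range_mul {u v : ℕ → ℝ} {A B : ℝ} (hu : HasSum u A) (hv : HasSum v B) :
    HasSum (fun k => ∑ i ∈ range (k + 1), u i * v (k - i)) (A * B) := by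
  simpa [hu.tsum_eq, hv.tsum_eq] using
    hasSum_sum_range_mul_of_summable_norm hu.summable.norm hv.summable.norm

theorem HasSum.nat_mul_sum_range_mul {u v : ℕ → ℝ} {A B A' B' : ℝ}
    (hu : HasSum u A) (hv : HasSum v B)
    (hu' : HasSum (fun i : ℕ => (i : ℝ) * u i) A') (hv' : HasSum (fun j : ℕ => (j : ℝ) * v j) B') :
    HasSum (fun k : ℕ => (k : ℝ) * ∑ i ∈ range (k + 1), u i * v (k - i)) (A' * B + A * B') := by
  refine ((hu'.sum_range_mul hv).add (hu.sum_range_mul hv')).congr_fun fun k => ?_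
  rw [mul_sum, ← sum_add_distrib]
  refine sum_congr rfl fun i hi => ?_
  rw [Nat.cast_sub (Nat.lt_succ_iff.mp (mem_range.mp hi))]
  ring

theorem hasSum_pow_div_factorial (y : ℝ) :
    HasSum (fun j : ℕ => y ^ j / (j ! : ℝ)) (Real.exp y) := by
  simpa [Real.exp_eq_exp_ℝ] using NormedSpace.expSeries_div_hasSum_exp y

theorem hasSum_nat_mul_pow_div_factorial (y : ℝ) :
    HasSum (fun j : ℕ => (j : ℝ) * (y ^ j / (j ! : ℝ))) (y * Real.exp y) :=
  (hasSum_pow_div_factorial y).nat_mul_of_succ_mul_eq fun j => by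
    rw [Nat.factorial_succ, pow_succ]
    push_cast
    field_simp

theorem hasSum_ascFactorial_div_factorial_mul_pow (n : ℕ) {t : ℝ} (ht : |t| < 1) :
    HasSum (fun i : ℕ => (n.ascFactorial i / i ! : ℝ) * t ^ i) ((1 - t) ^ n)⁻¹ := by
  cases n with
  | zero =>
    convert hasSum_single (f := fun i : ℕ => ((0 : ℕ).ascFactorial i / i ! : ℝ) * t ^ i) 0
      fun i hi => ?_ using 1
    · simp
    · obtain ⟨i, rfl⟩ := Nat.exists_eq_succ_of_ne_zero hi
      simp [Nat.zero_ascFactorial]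
  | succ m =>
    have h := hasSum_choose_mul_geometric_of_norm_lt_one m (r := t) (by simpa using ht)
    rw [one_div] at h
    refine h.congr_fun fun i => ?_
    rw [Nat.ascFactorial_eq_factorial_mul_choose, add_comm m i, ← Nat.choose_symm_add]
    push_cast
    field_simp

theorem hasSum_nat_mul_ascFactorial_div_factorial_mul_pow (n : ℕ) {t : ℝ} (ht : |t| < 1) :
    HasSum (fun i : ℕ => (i : ℝ) * ((n.ascFactorial i / i ! : ℝ) * t ^ i))
      (n * t * ((1 - t) ^ (n + 1))⁻¹) :=
  (hasSum_ascFactorial_div_factorial_mul_pow (n + 1) ht).nat_mul_of_succ_mul_eq fun i => by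
    rw [Nat.ascFactorial_succ, ← Nat.succ_ascFactorial, Nat.factorial_succ]
    push_cast
    field_simp
    ring

theorem risingFac_eq_ascFactorial (n i : ℕ) : risingFac n i = n.ascFactorial i := by
  induction i with
  | zero => simp [risingFac]
  | succ i ih =>
    rw [risingFac, prod_range_succ, ← risingFac, ih, Nat.ascFactorial_succ]
    push_cast
    ring

theorem pCoef_div_factorial_mul_pow (n : ℕ) (a t : ℝ) (k : ℕ) :
    pCoef n a k / k ! * t ^ k =
      ∑ i ∈ range (k + 1), (n.ascFactorial i / i ! : ℝ) * t ^ i * ((a * t) ^ (k - i) / (k - i)!) := by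
  rw [pCoef, sum_div, sum_mul]
  refine sum_congr rfl fun i hi => ?_
  have hik : i ≤ k := Nat.lt_succ_iff.mp (mem_range.mp hi)
  rw [Nat.cast_choose ℝ hik, risingFac_eq_ascFactorial, ← pow_mul_pow_sub t hik]
  field_simp
  ring

theorem hasSum_pCoef_div_factorial_mul_pow (n : ℕ) (a : ℝ) {t : ℝ} (ht : |t| < 1) :
    HasSum (fun k : ℕ => pCoef n a k / k ! * t ^ k) (((1 - t) ^ n)⁻¹ * Real.exp (a * t)) := by
  simpa only [pCoef_div_factorial_mul_pow] using
    (hasSum_ascFactorial_div_factorial_mul_pow n ht).sum_range_mul (hasSum_pow_div_factorial (a * t))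

theorem hasSum_nat_mul_pCoef_div_factorial_mul_pow (n : ℕ) (a : ℝ) {t : ℝ} (ht : |t| < 1) :
    HasSum (fun k : ℕ => (k : ℝ) * (pCoef n a k / k ! * t ^ k))
      (n * t * ((1 - t) ^ (n + 1))⁻¹ * Real.exp (a * t) +
        ((1 - t) ^ n)⁻¹ * (a * t * Real.exp (a * t))) := by
  simpa only [pCoef_div_factorial_mul_pow] using
    (hasSum_ascFactorial_div_factorial_mul_pow n ht).nat_mul_sum_range_mul
      (hasSum_pow_div_factorial (a * t)) (hasSum_nat_mul_ascFactorial_div_factorial_mul_pow n ht)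
      (hasSum_nat_mul_pow_div_factorial (a * t))

theorem W_eq (n : ℕ) (a : ℝ) (k : ℕ) {x : ℝ} (hx : 1 + x ≠ 0) :
    W n a k x = Real.exp (-(a * (x / (1 + x)))) * (1 - x / (1 + x)) ^ n *
      (pCoef n a k / k ! * (x / (1 + x)) ^ k) := by
  rw [W, one_sub_div hx, add_sub_cancel_right, div_pow, div_pow, pow_add]
  field_simp
  ring

theorem abs_div_one_add_lt_one {x : ℝ} (hx : 0 ≤ x) : |x / (1 + x)| < 1 := by
  rw [abs_of_nonneg (by positivity), div_lt_one (by positivity)]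
  linarith

theorem hasSum_W (n : ℕ) (a : ℝ) {x : ℝ} (hx : 0 ≤ x) : HasSum (fun k => W n a k x) 1 := by
  have hx1 : 1 + x ≠ 0 := by positivity
  have h := ((hasSum_pCoef_div_factorial_mul_pow n a (abs_div_one_add_lt_one hx)).mul_left
    (Real.exp (-(a * (x / (1 + x)))) * (1 - x / (1 + x)) ^ n)).congr_fun fun k => W_eq n a k hx1
  convert h using 1
  · rfl
  rw [one_sub_div hx1, add_sub_cancel_right, Real.exp_neg]
  field_simp

theorem hasSum_nat_mul_W (n : ℕ) (a : ℝ) {x : ℝ} (hx : 0 ≤ x) :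
    HasSum (fun k : ℕ => (k : ℝ) * W n a k x) (n * x + a * (x / (1 + x))) := by
  have hx1 : 1 + x ≠ 0 := by positivity
  have h := ((hasSum_nat_mul_pCoef_div_factorial_mul_pow n a (abs_div_one_add_lt_one hx)).mul_left
    (Real.exp (-(a * (x / (1 + x)))) * (1 - x / (1 + x)) ^ n)).congr_fun
    fun k => show (k : ℝ) * W n a k x = _ by rw [W_eq n a k hx1]; ring
  convert h using 1
  · rfl
  rw [one_sub_div hx1, add_sub_cancel_right, Real.exp_neg]
  field_simp
  rw [pow_succ]
  field_simp

theorem Lop_first_moment_general (a : ℝ) (n : ℕ) (α β : ℝ) (x : ℝ) (hx : 0 ≤ x) :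
    Lop n a α β (fun t => t) x =
      ((n : ℝ) / ((n : ℝ) + β)) * x + (a / ((n : ℝ) + β)) * (x / (1 + x)) +
        α / ((n : ℝ) + β) := by
  have h := ((hasSum_nat_mul_W n a hx).add ((hasSum_W n a hx).mul_left α)).div_const (n + β)
  rw [Lop, (h.congr_fun fun k => by ring).tsum_eq]
  ring

theorem Lop_first_moment (a : ℝ) (ha : 0 ≤ a) (n : ℕ) (hn : 1 ≤ n) (α β : ℝ)
    (hα : 0 ≤ α) (hαβ : α ≤ β) (x : ℝ) (hx : 0 ≤ x) :
    Lop n a α β (fun t => t) x =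
      ((n : ℝ) / ((n : ℝ) + β)) * x + (a / ((n : ℝ) + β)) * (x / (1 + x)) +
        α / ((n : ℝ) + β) :=
  Lop_first_moment_general a n α β x hx
end

section
/- For every real a ≥ 0, every integer n ≥ 1, all reals 0 ≤ α ≤ β and every x ≥ 0, the second moment of the Stancu-type operator is L_{n,a}^{α,β}(t²;x) = ((n²+n)/(n+β)²)·x² + (n(1+2α)/(n+β)²)·x + (a²/(n+β)²)·x²/(1+x)² + (2an/(n+β)²)·x²/(1+x) + (a(1+2α)/(n+β)²)·x/(1+x) + α²/(n+β)². -/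
open MeasureTheory Filter

/-!
With `t = x / (1 + x)`, the weight `W_{n,k}^a(x)` is the convolution over `i + j = k` of the
negative binomial weights `q_{n,i} = (n)_i t^i (1 - t)^n / i!` and the Poisson weights
`e^{-at} (at)^j / j!`. Their factorial moments are `n x`, `n (n + 1) x²` and `at`, `(at)²`,
each obtained from a one-step index shift such as `(i + 1) q_{n,i+1} = n x q_{n+1,i}`.
Factorial moments of a convolution combine like those of a sum of independent variables,
`E[(X + Y)(X + Y - 1)] = E[X(X - 1)] + 2 E[X] E[Y] + E[Y(Y - 1)]`, and the theorem follows from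
`(k + α)² = k (k - 1) + (1 + 2α) k + α²`.
-/

open Finset Nat

lemma risingFac_succ (n i : ℕ) : risingFac n (i + 1) = n * risingFac (n + 1) i := by
  rw [risingFac, prod_range_succ', risingFac]
  push_cast
  simp only [add_assoc, add_comm (1 : ℝ)]
  ring

lemma risingFac_add_one_left_eq_factorial_mul_choose (p i : ℕ) : risingFac (p + 1) i = i ! * (i + p).choose p := by
  have : risingFac (p + 1) i = (p + 1).ascFactorial i := by
    rw [risingFac, ascFactorial_eq_prod_range]; push_cast; rfl
  rw [this, ascFactorial_eq_factorial_mul_choose, add_comm p, ← choose_symm_add]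
  push_cast; rfl

lemma hasSum_risingFac_div_factorial_mul_pow (m : ℕ) {t : ℝ} (ht : |t| < 1) :
    HasSum (fun i => risingFac m i / i ! * t ^ i) ((1 - t) ^ m)⁻¹ := by
  rcases m with _ | p
  · rw [pow_zero, inv_one]
    convert hasSum_ite_eq 0 (1 : ℝ) with i
    rcases i with _ | i
    · simp [risingFac]
    · simp [risingFac_succ]
  · have h := hasSum_choose_mul_geometric_of_norm_lt_one (𝕜 := ℝ) p (r := t) (by simpa using ht)
    rw [one_div] at h
    refine h.congr_fun fun i => ?_
    rw [risingFac_add_one_left_eq_factorial_mul_choose]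
    field_simp

lemma hasSum_of_succ_eq_mul {f g : ℕ → ℝ} {c S : ℝ} (hg : HasSum g S) (h0 : f 0 = 0)
    (hsucc : ∀ i, f (i + 1) = c * g i) : HasSum f (c * S) :=
  (hasSum_nat_add_iff' 1).mp (by simpa [h0, hsucc] using hg.mul_left c)

lemma hasSum_sum_antidiagonal_mul {f g : ℕ → ℝ} {S T : ℝ} (hf : HasSum f S) (hg : HasSum g T) :
    HasSum (fun k => ∑ p ∈ antidiagonal k, f p.1 * g p.2) (S * T) := by
  have hf' : Summable fun i => ‖f i‖ := by
    simpa [Real.norm_eq_abs, summable_abs_iff] using hf.summable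
  have hg' : Summable fun i => ‖g i‖ := by
    simpa [Real.norm_eq_abs, summable_abs_iff] using hg.summable
  rw [(summable_norm_sum_mul_antidiagonal_of_summable_norm hf' hg').of_norm.hasSum_iff,
    ← tsum_mul_tsum_eq_tsum_sum_antidiagonal_of_summable_norm hf' hg', hf.tsum_eq, hg.tsum_eq]

structure HasFactorialMoments (f : ℕ → ℝ) (m₁ m₂ : ℝ) : Prop where
  hasSum : HasSum f 1
  hasSum_first : HasSum (fun k => k * f k) m₁
  hasSum_second : HasSum (fun k => k * (k - 1) * f k) m₂

namespace HasFactorialMoments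

variable {f g : ℕ → ℝ} {μ₁ μ₂ ν₁ ν₂ : ℝ}

theorem convolution (hf : HasFactorialMoments f μ₁ μ₂) (hg : HasFactorialMoments g ν₁ ν₂) :
    HasFactorialMoments (fun k => ∑ p ∈ antidiagonal k, f p.1 * g p.2)
      (μ₁ + ν₁) (μ₂ + 2 * μ₁ * ν₁ + ν₂) where
  hasSum := by simpa using hasSum_sum_antidiagonal_mul hf.hasSum hg.hasSum
  hasSum_first := by
    convert (hasSum_sum_antidiagonal_mul hf.hasSum_first hg.hasSum).add
      (hasSum_sum_antidiagonal_mul hf.hasSum hg.hasSum_first) using 1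
    · funext k
      rw [mul_sum, ← sum_add_distrib]
      refine sum_congr rfl fun p hp => ?_
      rw [← mem_antidiagonal.1 hp]
      push_cast; ring
    · ring
  hasSum_second := by
    convert ((hasSum_sum_antidiagonal_mul hf.hasSum_second hg.hasSum).add
      ((hasSum_sum_antidiagonal_mul hf.hasSum_first hg.hasSum_first).mul_left 2)).add
      (hasSum_sum_antidiagonal_mul hf.hasSum hg.hasSum_second) using 1
    · funext k
      rw [mul_sum, mul_sum, ← sum_add_distrib, ← sum_add_distrib]
      refine sum_congr rfl fun p hp => ?_
      rw [← mem_antidiagonal.1 hp]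
      push_cast; ring
    · ring

theorem hasSum_mul_div_sq (h : HasFactorialMoments f μ₁ μ₂) (α c : ℝ) :
    HasSum (fun k => f k * ((k + α) / c) ^ 2) ((μ₂ + (1 + 2 * α) * μ₁ + α ^ 2) / c ^ 2) := by
  have := ((h.hasSum_second.add (h.hasSum_first.mul_left (1 + 2 * α))).add
    (h.hasSum.mul_left (α ^ 2))).div_const (c ^ 2)
  rw [mul_one] at this
  exact this.congr_fun fun k => by ring

end HasFactorialMoments

noncomputable def negBinomialWeight (n : ℕ) (t : ℝ) (i : ℕ) : ℝ :=
  risingFac n i / i ! * t ^ i * (1 - t) ^ n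

section NegBinomial

variable {t : ℝ}

lemma hasSum_negBinomialWeight (n : ℕ) (ht : |t| < 1) : HasSum (negBinomialWeight n t) 1 := by
  have h1t : (1 - t) ^ n ≠ 0 := pow_ne_zero _ (by linarith [le_abs_self t])
  have := (hasSum_risingFac_div_factorial_mul_pow n ht).mul_right ((1 - t) ^ n)
  rwa [inv_mul_cancel₀ h1t] at this

lemma succ_mul_negBinomialWeight_succ (n i : ℕ) (ht : t ≠ 1) :
    (i + 1) * negBinomialWeight n t (i + 1) = n * t / (1 - t) * negBinomialWeight (n + 1) t i := by
  have : 1 - t ≠ 0 := sub_ne_zero.2 ht.symm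
  simp only [negBinomialWeight, risingFac_succ, factorial_succ]
  push_cast
  field_simp
  ring

lemma hasSum_natCast_mul_negBinomialWeight (n : ℕ) (ht : |t| < 1) :
    HasSum (fun i => i * negBinomialWeight n t i) (n * (t / (1 - t))) := by
  have ht1 : t ≠ 1 := by rintro rfl; simp at ht
  have := hasSum_of_succ_eq_mul (f := fun i : ℕ => (i : ℝ) * negBinomialWeight n t i)
    (hasSum_negBinomialWeight (n + 1) ht) (by simp)
    fun i => by push_cast; exact succ_mul_negBinomialWeight_succ n i ht1
  rwa [mul_one, mul_div_assoc] at this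

lemma hasFactorialMoments_negBinomialWeight (n : ℕ) (ht : |t| < 1) :
    HasFactorialMoments (negBinomialWeight n t) (n * (t / (1 - t)))
      (n * (n + 1) * (t / (1 - t)) ^ 2) where
  hasSum := hasSum_negBinomialWeight n ht
  hasSum_first := hasSum_natCast_mul_negBinomialWeight n ht
  hasSum_second := by
    have ht1 : t ≠ 1 := by rintro rfl; simp at ht
    have := hasSum_of_succ_eq_mul (c := n * t / (1 - t))
      (f := fun i : ℕ => (i : ℝ) * (i - 1) * negBinomialWeight n t i)
      (hasSum_natCast_mul_negBinomialWeight (n + 1) ht) (by simp) fun i => by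
        push_cast
        rw [add_sub_cancel_right, mul_comm _ (i : ℝ), mul_assoc,
          succ_mul_negBinomialWeight_succ n i ht1]
        ring
    convert this using 1
    push_cast; ring

end NegBinomial

noncomputable def poissonWeight (y : ℝ) (j : ℕ) : ℝ := Real.exp (-y) * y ^ j / j !

lemma succ_mul_poissonWeight_succ (y : ℝ) (j : ℕ) :
    (j + 1) * poissonWeight y (j + 1) = y * poissonWeight y j := by
  simp only [poissonWeight, factorial_succ]
  push_cast
  field_simp
  ring

lemma hasFactorialMoments_poissonWeight (y : ℝ) :
    HasFactorialMoments (poissonWeight y) y (y ^ 2) := by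
  have hsum : HasSum (poissonWeight y) 1 := by
    have := (NormedSpace.expSeries_div_hasSum_exp y).mul_left (Real.exp (-y))
    rw [← Real.exp_eq_exp_ℝ, ← Real.exp_add, neg_add_cancel, Real.exp_zero] at this
    exact this.congr_fun fun j => mul_div_assoc _ _ _
  have hfirst : HasSum (fun j => j * poissonWeight y j) y := by
    have := hasSum_of_succ_eq_mul (f := fun j : ℕ => (j : ℝ) * poissonWeight y j) hsum (by simp)
      fun j => by push_cast; exact succ_mul_poissonWeight_succ y j
    rwa [mul_one] at this
  refine ⟨hsum, hfirst, ?_⟩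
  have := hasSum_of_succ_eq_mul (c := y)
    (f := fun j : ℕ => (j : ℝ) * (j - 1) * poissonWeight y j) hfirst (by simp) fun j => by
      push_cast
      rw [add_sub_cancel_right, mul_comm _ (j : ℝ), mul_assoc, succ_mul_poissonWeight_succ]
      ring
  rwa [← sq] at this

lemma W_eq_sum_antidiagonal (n : ℕ) (a : ℝ) (k : ℕ) {x : ℝ} (hx : 1 + x ≠ 0) :
    W n a k x = ∑ p ∈ antidiagonal k,
      negBinomialWeight n (x / (1 + x)) p.1 * poissonWeight (a * (x / (1 + x))) p.2 := by
  rw [Nat.sum_antidiagonal_eq_sum_range_succ_mk, W, pCoef, sum_div, mul_sum, sum_mul, sum_div]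
  refine sum_congr rfl fun i hi => ?_
  obtain ⟨j, rfl⟩ : ∃ j, k = i + j := ⟨k - i, by grind⟩
  have h1x : 1 - x / (1 + x) = 1 / (1 + x) := by field_simp; ring
  have hexp : -(a * x) / (1 + x) = -(a * (x / (1 + x))) := by ring
  rw [Nat.cast_choose ℝ (Nat.le_add_right i j), Nat.add_sub_cancel_left, negBinomialWeight,
    poissonWeight, h1x, hexp]
  simp only [div_pow, mul_pow, one_pow, pow_add]
  field_simp

lemma hasFactorialMoments_W (n : ℕ) (a : ℝ) {x : ℝ} (hx : 0 ≤ x) :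
    HasFactorialMoments (fun k => W n a k x) (n * x + a * (x / (1 + x)))
      (n * (n + 1) * x ^ 2 + 2 * (n * x) * (a * (x / (1 + x))) + (a * (x / (1 + x))) ^ 2) := by
  have h1x : 1 + x ≠ 0 := by positivity
  have ht : |x / (1 + x)| < 1 := by
    rw [abs_of_nonneg (by positivity), div_lt_one (by positivity)]
    linarith
  have hodds : x / (1 + x) / (1 - x / (1 + x)) = x := by field_simp; ring
  simp_rw [W_eq_sum_antidiagonal n a _ h1x]
  have := (hasFactorialMoments_negBinomialWeight n ht).convolution
    (hasFactorialMoments_poissonWeight (a * (x / (1 + x))))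
  rwa [hodds] at this

theorem Lop_second_moment_general (a : ℝ) (n : ℕ) (α β : ℝ) (x : ℝ) (hx : 0 ≤ x) :
    Lop n a α β (fun t => t ^ 2) x =
      (((n : ℝ) ^ 2 + n) / ((n : ℝ) + β) ^ 2) * x ^ 2 +
        ((n : ℝ) * (1 + 2 * α) / ((n : ℝ) + β) ^ 2) * x +
        (a ^ 2 / ((n : ℝ) + β) ^ 2) * (x ^ 2 / (1 + x) ^ 2) +
        (2 * a * n / ((n : ℝ) + β) ^ 2) * (x ^ 2 / (1 + x)) +
        (a * (1 + 2 * α) / ((n : ℝ) + β) ^ 2) * (x / (1 + x)) +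
        α ^ 2 / ((n : ℝ) + β) ^ 2 := by
  rw [Lop, ((hasFactorialMoments_W n a hx).hasSum_mul_div_sq α (n + β)).tsum_eq, ← div_pow x]
  ring

theorem Lop_second_moment (a : ℝ) (ha : 0 ≤ a) (n : ℕ) (hn : 1 ≤ n) (α β : ℝ)
    (hα : 0 ≤ α) (hαβ : α ≤ β) (x : ℝ) (hx : 0 ≤ x) :
    Lop n a α β (fun t => t ^ 2) x =
      (((n : ℝ) ^ 2 + n) / ((n : ℝ) + β) ^ 2) * x ^ 2 +
        ((n : ℝ) * (1 + 2 * α) / ((n : ℝ) + β) ^ 2) * x +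
        (a ^ 2 / ((n : ℝ) + β) ^ 2) * (x ^ 2 / (1 + x) ^ 2) +
        (2 * a * n / ((n : ℝ) + β) ^ 2) * (x ^ 2 / (1 + x)) +
        (a * (1 + 2 * α) / ((n : ℝ) + β) ^ 2) * (x / (1 + x)) +
        α ^ 2 / ((n : ℝ) + β) ^ 2 :=
  Lop_second_moment_general a n α β x hx
end
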